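/- (Lemma 3, per-demand-type reward bound.) Let d ≥ 1 and n ≥ d be integers, and let r_1 ≥ r_2 ≥ … ≥ r_n be reals with r_i ∈ [0,1] for all i and r_i = 0 for i > d. Let Y_1, …, Y_n be {0,1}-valued random variables on a probability space with E[Y_i] = y_i, such that Σ_{i=1}^n y_i ≤ 1 and, for every subset S ⊆ [n], P(Y_i = 0 for all i ∈ S) ≤ Π_{i∈S}(1 − y_i). Then E[max({r_i : Y_i = 1} ∪ {0})] ≥ (1 − (1 − 1/d)^d) · Σ_{i=1}^n r_i y_i. -/

import Mathlib

/-!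
If `i₀` is the first selected index, the largest selected reward `r i₀` telescopes to
`∑_{k ≥ i₀} (r k - r (k+1))`, so the expected maximum is the layer-cake sum
`∑_{k < d} (r k - r (k+1)) P(A k)`, where `A k` is the event that some index `≤ k` is selected.
Negative correlation on zeros and AM-GM give `P(A k) ≥ 1 - ∏_{i ≤ k} (1 - y i) ≥ 1 - (1 - s_k / d)^d`
with `s_k = ∑_{i ≤ k} y i ≤ 1`, and by concavity of `s ↦ 1 - (1 - s / d)^d` this is at least
`(1 - (1 - 1/d)^d) s_k`. Abel summation turns `∑_k (r k - r (k+1)) s_k` back into `∑ i, r i * y i`.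
-/

open MeasureTheory Finset

theorem sum_range_ite_le_sub_succ {G : Type*} [AddCommGroup G] {R : ℕ → G} {d : ℕ}
    (hR : ∀ k, d ≤ k → R k = 0) (m : ℕ) :
    ∑ k ∈ range d, (if m ≤ k then R k - R (k + 1) else 0) = R m := by
  rw [← sum_filter]
  rcases le_or_gt m d with hmd | hdm
  · have hIco : (range d).filter (m ≤ ·) = Ico m d := by ext; simp [and_comm]
    rw [hIco, sum_Ico_eq_sub _ hmd, sum_range_sub', sum_range_sub', hR d le_rfl]
    abel
  · rw [hR m hdm.le, sum_eq_zero]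
    intro k hk
    simp only [mem_filter, mem_range] at hk
    omega

theorem sum_range_sub_succ_mul_sum_filter {ι R : Type*} [CommRing R] {F : ℕ → R} {d : ℕ}
    (hF : ∀ k, d ≤ k → F k = 0) (s : Finset ι) (φ : ι → ℕ) (y : ι → R) :
    ∑ k ∈ range d, (F k - F (k + 1)) * ∑ i ∈ s with φ i ≤ k, y i = ∑ i ∈ s, F (φ i) * y i := by
  simp_rw [sum_filter, mul_sum]
  rw [sum_comm]
  refine sum_congr rfl fun i _ => ?_
  rw [← sum_range_ite_le_sub_succ hF (φ i), sum_mul]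
  refine sum_congr rfl fun k _ => ?_
  split_ifs <;> simp

theorem Fin.card_filter_val_le (n k : ℕ) : #{i : Fin n | i.val ≤ k} ≤ k + 1 := by
  calc #{i : Fin n | i.val ≤ k} = min n (k + 1) := by rw [← Fin.card_filter_val_lt]; simp
    _ ≤ k + 1 := min_le_right _ _

section zeroExtend

variable {α : Type*} [Zero α] {n : ℕ} {r : Fin n → α}

def zeroExtend (r : Fin n → α) (k : ℕ) : α :=
  if h : k < n then r ⟨k, h⟩ else 0

@[simp]
theorem zeroExtend_val (i : Fin n) : zeroExtend r i = r i :=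
  dif_pos i.2

theorem zeroExtend_eq_zero {d : ℕ} (hr : ∀ i : Fin n, d ≤ (i : ℕ) → r i = 0) {k : ℕ}
    (hk : d ≤ k) : zeroExtend r k = 0 := by
  unfold zeroExtend
  split_ifs
  exacts [hr _ hk, rfl]

theorem Antitone.zeroExtend [Preorder α] (hr : Antitone r) (hr0 : ∀ i, 0 ≤ r i) :
    Antitone (zeroExtend r) := by
  intro a b hab
  unfold _root_.zeroExtend
  split_ifs with hb ha ha
  · exact hr (Fin.mk_le_mk.2 hab)
  · omega
  · exact hr0 _
  · exact le_rfl

end zeroExtend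

open Classical in
theorem sSup_insert_zero_image_eq_sum {R : ℕ → ℝ} (hR : Antitone R) {d : ℕ}
    (hRd : ∀ k, d ≤ k → R k = 0) (T : Set ℕ) :
    sSup (insert 0 (R '' T)) =
      ∑ k ∈ range d, (R k - R (k + 1)) * if ∃ i ∈ T, i ≤ k then 1 else 0 := by
  rcases T.eq_empty_or_nonempty with rfl | hT
  · simp
  have hmax : sSup (insert 0 (R '' T)) = R (sInf T) := by
    refine IsGreatest.csSup_eq ⟨.inr ⟨_, Nat.sInf_mem hT, rfl⟩, ?_⟩
    rintro v (rfl | ⟨i, hi, rfl⟩)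
    · simpa [hRd (max (sInf T) d) (le_max_right _ _)] using hR (le_max_left (sInf T) d)
    · exact hR (Nat.sInf_le hi)
  have hfirst : ∀ k, (∃ i ∈ T, i ≤ k) ↔ sInf T ≤ k := fun k =>
    ⟨fun ⟨i, hi, hik⟩ => (Nat.sInf_le hi).trans hik, fun h => ⟨_, Nat.sInf_mem hT, h⟩⟩
  simp_rw [hmax, hfirst, mul_ite, mul_one, mul_zero]
  exact (sum_range_ite_le_sub_succ hRd _).symm

theorem one_sub_add_mul_pow_le {b x : ℝ} (hb : 0 ≤ b) (hx0 : 0 ≤ x) (hx1 : x ≤ 1) (d : ℕ) :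
    (1 - x + x * b) ^ d ≤ 1 - x + x * b ^ d := by
  simpa using (convexOn_pow d).2 (Set.mem_Ici.2 zero_le_one) (Set.mem_Ici.2 hb)
    (sub_nonneg.2 hx1) hx0 (by ring)

theorem prod_one_sub_le_one_sub_sum_div_pow {ι : Type*} {s : Finset ι} {y : ι → ℝ}
    (hy : ∀ i ∈ s, y i ≤ 1) {d : ℕ} (hd : 0 < d) (hs : #s ≤ d) :
    ∏ i ∈ s, (1 - y i) ≤ (1 - (∑ i ∈ s, y i) / d) ^ d := by
  -- AM-GM for the values `1 - y i` with weight `1`, padded by the value `1` with weight `d - #s`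
  let w : Option ι → ℝ := fun o => o.elim (d - #s) fun _ => 1
  let z : Option ι → ℝ := fun o => o.elim 1 fun i => 1 - y i
  have hz : ∀ i ∈ s, 0 ≤ 1 - y i := fun i hi => sub_nonneg.2 (hy i hi)
  have hw : ∑ o ∈ s.insertNone, w o = d := by simp [w, sum_insertNone]
  have hd' : (0 : ℝ) < d := by exact_mod_cast hd
  have amgm := Real.geom_mean_le_arith_mean s.insertNone w z
    (by rintro (_ | i) _ <;> simp [w, hs]) (hw ▸ hd')
    (by rintro (_ | i) hi <;> simp_all [z])
  rw [hw] at amgm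
  simp only [w, z, prod_insertNone, sum_insertNone, Option.elim, Real.one_rpow, Real.rpow_one,
    one_mul, mul_one, sum_sub_distrib, sum_const, nsmul_eq_mul] at amgm
  calc ∏ i ∈ s, (1 - y i) = ((∏ i ∈ s, (1 - y i)) ^ (d : ℝ)⁻¹) ^ d :=
        (Real.rpow_inv_natCast_pow (prod_nonneg hz) hd.ne').symm
    _ ≤ (1 - (∑ i ∈ s, y i) / d) ^ d := by
        gcongr
        · exact Real.rpow_nonneg (prod_nonneg hz) _
        · refine amgm.trans_eq ?_
          rw [sub_add_sub_cancel, sub_div, div_self hd'.ne']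

theorem mul_sum_le_one_sub_prod_one_sub {ι : Type*} {s : Finset ι} {y : ι → ℝ}
    (hy : ∀ i ∈ s, 0 ≤ y i) (hsum : ∑ i ∈ s, y i ≤ 1) {d : ℕ} (hd : 0 < d) (hs : #s ≤ d) :
    (1 - (1 - 1 / (d : ℝ)) ^ d) * ∑ i ∈ s, y i ≤ 1 - ∏ i ∈ s, (1 - y i) := by
  set x := ∑ i ∈ s, y i
  have hprod := prod_one_sub_le_one_sub_sum_div_pow
    (fun i hi => (single_le_sum hy hi).trans hsum) hd hs
  have hb : (0 : ℝ) ≤ 1 - 1 / d := by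
    rw [sub_nonneg, div_le_one (by exact_mod_cast hd)]
    exact_mod_cast hd
  have hconv := one_sub_add_mul_pow_le hb (sum_nonneg hy) hsum d
  rw [show 1 - x + x * (1 - 1 / d) = 1 - x / d by ring] at hconv
  linarith

theorem mul_sum_le_measureReal_exists_eq_one {Ω ι : Type*} [MeasurableSpace Ω] {P : Measure Ω}
    [IsProbabilityMeasure P] {Y : ι → Ω → ℝ} (h01 : ∀ i ω, Y i ω = 0 ∨ Y i ω = 1)
    {y : ι → ℝ} {s : Finset ι} (hneg : P.real {ω | ∀ i ∈ s, Y i ω = 0} ≤ ∏ i ∈ s, (1 - y i))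
    (hy : ∀ i ∈ s, 0 ≤ y i) (hsum : ∑ i ∈ s, y i ≤ 1) {d : ℕ} (hd : 0 < d) (hs : #s ≤ d) :
    (1 - (1 - 1 / (d : ℝ)) ^ d) * ∑ i ∈ s, y i ≤ P.real {ω | ∃ i ∈ s, Y i ω = 1} := by
  have hcover : P.real Set.univ ≤
      P.real {ω | ∃ i ∈ s, Y i ω = 1} + P.real {ω | ∀ i ∈ s, Y i ω = 0} := by
    refine (measureReal_mono fun ω _ => ?_).trans (measureReal_union_le _ _)
    by_cases h : ∃ i ∈ s, Y i ω = 1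
    · exact .inl h
    · exact .inr fun i hi => (h01 i ω).resolve_right fun h1 => h ⟨i, hi, h1⟩
  rw [probReal_univ] at hcover
  linarith [mul_sum_le_one_sub_prod_one_sub hy hsum hd hs]

theorem integral_sSup_insert_zero_eq_sum {Ω : Type*} [MeasurableSpace Ω] (P : Measure Ω)
    [IsFiniteMeasure P] {n d : ℕ} {r : Fin n → ℝ} (hr : Antitone r) (hr0 : ∀ i, 0 ≤ r i)
    (hrd : ∀ i : Fin n, d ≤ (i : ℕ) → r i = 0) {Y : Fin n → Ω → ℝ}
    (hmeas : ∀ i, Measurable (Y i)) :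
    ∫ ω, sSup (insert (0 : ℝ) {v : ℝ | ∃ i, Y i ω = 1 ∧ v = r i}) ∂P =
      ∑ k ∈ range d, (zeroExtend r k - zeroExtend r (k + 1)) *
        P.real {ω | ∃ i : Fin n, (i : ℕ) ≤ k ∧ Y i ω = 1} := by
  set A : ℕ → Set Ω := fun k => {ω | ∃ i : Fin n, (i : ℕ) ≤ k ∧ Y i ω = 1}
  have hA : ∀ k, MeasurableSet (A k) := fun k => by
    simp only [A, Set.ofPred_exists, Set.ofPred_and]
    exact .iUnion fun i => (MeasurableSet.const _).inter (hmeas i (measurableSet_singleton 1))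
  have hmax : ∀ ω, sSup (insert (0 : ℝ) {v : ℝ | ∃ i, Y i ω = 1 ∧ v = r i}) =
      ∑ k ∈ range d, (zeroExtend r k - zeroExtend r (k + 1)) * (A k).indicator 1 ω := by
    intro ω
    have hsel : {v : ℝ | ∃ i, Y i ω = 1 ∧ v = r i} =
        zeroExtend r '' {k | ∃ i : Fin n, (i : ℕ) = k ∧ Y i ω = 1} := by
      ext v
      constructor
      · rintro ⟨i, hi, rfl⟩
        exact ⟨i, ⟨i, rfl, hi⟩, zeroExtend_val i⟩
      · rintro ⟨_, ⟨i, rfl, hi⟩, rfl⟩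
        exact ⟨i, hi, zeroExtend_val i⟩
    rw [hsel, sSup_insert_zero_image_eq_sum (hr.zeroExtend hr0) fun k => zeroExtend_eq_zero hrd]
    simp [A, Set.indicator_apply, and_comm]
  simp_rw [hmax]
  rw [integral_finsetSum _ fun k _ => ((integrable_const 1).indicator (hA k)).const_mul _]
  simp_rw [integral_const_mul, integral_indicator_one (hA _)]
  rfl

theorem per_demand_type_reward_bound_general
    {Ω : Type*} [MeasurableSpace Ω] (P : Measure Ω) [IsProbabilityMeasure P]
    (d n : ℕ)
    (r : Fin n → ℝ) (hr : ∀ i, r i ∈ Set.Icc (0 : ℝ) 1)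
    (hsorted : ∀ i j : Fin n, i ≤ j → r j ≤ r i)
    (hzero : ∀ i : Fin n, d ≤ (i : ℕ) → r i = 0)
    (Y : Fin n → Ω → ℝ) (hmeas : ∀ i, Measurable (Y i))
    (h01 : ∀ i ω, Y i ω = 0 ∨ Y i ω = 1)
    (y : Fin n → ℝ) (hmean : ∀ i, ∫ ω, Y i ω ∂P = y i)
    (hsum : ∑ i, y i ≤ 1)
    (hneg : ∀ S : Finset (Fin n),
      (P {ω | ∀ i ∈ S, Y i ω = 0}).toReal ≤ ∏ i ∈ S, (1 - y i)) :
    (∫ ω, sSup (insert (0 : ℝ) {v : ℝ | ∃ i, Y i ω = 1 ∧ v = r i}) ∂P)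
      ≥ (1 - (1 - 1 / (d : ℝ)) ^ d) * ∑ i, r i * y i := by
  set C := 1 - (1 - 1 / (d : ℝ)) ^ d
  have hy0 : ∀ i, 0 ≤ y i := fun i =>
    hmean i ▸ integral_nonneg fun ω => by rcases h01 i ω with h | h <;> simp [h]
  have hprob : ∀ k ∈ range d, C * ∑ i with i.val ≤ k, y i ≤
      P.real {ω | ∃ i : Fin n, (i : ℕ) ≤ k ∧ Y i ω = 1} := fun k hk => by
    have hk : k < d := mem_range.1 hk
    simpa only [mem_filter, mem_univ, true_and] using
      mul_sum_le_measureReal_exists_eq_one h01 (hneg _) (fun i _ => hy0 i)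
        ((sum_le_sum_of_subset_of_nonneg (subset_univ _) fun i _ _ => hy0 i).trans hsum)
        ((Nat.zero_le k).trans_lt hk) ((Fin.card_filter_val_le n k).trans hk)
  rw [integral_sSup_insert_zero_eq_sum P hsorted (fun i => (hr i).1) hzero hmeas, ge_iff_le]
  calc C * ∑ i, r i * y i
      = ∑ k ∈ range d, (zeroExtend r k - zeroExtend r (k + 1)) *
          (C * ∑ i with i.val ≤ k, y i) := by
        simp_rw [mul_left_comm _ C, ← mul_sum, sum_range_sub_succ_mul_sum_filter
          (fun k => zeroExtend_eq_zero hzero), zeroExtend_val]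
    _ ≤ _ := sum_le_sum fun k hk => mul_le_mul_of_nonneg_left (hprob k hk)
        (sub_nonneg.2 (Antitone.zeroExtend hsorted (fun i => (hr i).1) k.le_succ))

/-- Lemma 3 (per-demand-type reward bound): for sorted rewards `r_1 ≥ … ≥ r_n` in `[0,1]` with
`r_i = 0` for `i > d`, and `{0,1}`-valued random variables `Y_i` with means `y_i`, `∑ y_i ≤ 1`,
that are negatively correlated on zeros, the expected largest reward among selected indices is at
least `(1 - (1 - 1/d)^d) ∑ r_i y_i`. -/
theorem per_demand_type_reward_bound
    {Ω : Type*} [MeasurableSpace Ω] (P : Measure Ω) [IsProbabilityMeasure P]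
    (d n : ℕ) (hd : 1 ≤ d) (hdn : d ≤ n)
    (r : Fin n → ℝ) (hr : ∀ i, r i ∈ Set.Icc (0 : ℝ) 1)
    (hsorted : ∀ i j : Fin n, i ≤ j → r j ≤ r i)
    (hzero : ∀ i : Fin n, d ≤ (i : ℕ) → r i = 0)
    (Y : Fin n → Ω → ℝ) (hmeas : ∀ i, Measurable (Y i))
    (h01 : ∀ i ω, Y i ω = 0 ∨ Y i ω = 1)
    (y : Fin n → ℝ) (hmean : ∀ i, ∫ ω, Y i ω ∂P = y i)
    (hsum : ∑ i, y i ≤ 1)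
    (hneg : ∀ S : Finset (Fin n),
      (P {ω | ∀ i ∈ S, Y i ω = 0}).toReal ≤ ∏ i ∈ S, (1 - y i)) :
    (∫ ω, sSup (insert (0 : ℝ) {v : ℝ | ∃ i, Y i ω = 1 ∧ v = r i}) ∂P)
      ≥ (1 - (1 - 1 / (d : ℝ)) ^ d) * ∑ i, r i * y i :=
  per_demand_type_reward_bound_general P d n r hr hsorted hzero Y hmeas h01 y hmean hsum hneg
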